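/- Let c¹, c² ∈ ℕ₊ⁿ define a BUCO instance and let (H, c1, c2) be the associated MSp instance. Then the non-dominated set Y_N of the MSp instance contains at most n + 1 value vectors y with first component y¹ ≥ M. -/

import Mathlib

namespace MSpPaper

open SimpleGraph

variable {V : Type*}

/-- Minimum total `c2`-weight of a walk from `u` to `v` using only edges in `F`
(the set of weights of such walks is a set of naturals; its infimum is `0` when no walk exists). -/
noncomputable def wdist (F : Set (Sym2 V)) (c2 : Sym2 V → ℕ) (u v : V) : ℕ :=
  sInf (Set.range fun p : (SimpleGraph.fromEdgeSet F).Walk u v => (p.edges.map c2).sum)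

/-- `S` is a spanner of `G`: a subset of the edges such that the resulting subgraph is connected. -/
def IsSpanner (G : SimpleGraph V) (S : Set (Sym2 V)) : Prop :=
  S ⊆ G.edgeSet ∧ (SimpleGraph.fromEdgeSet S).Connected

/-- First objective: total `c1`-cost of the spanner. -/
def f1 (c1 : Sym2 V → ℤ) (S : Finset (Sym2 V)) : ℤ := ∑ e ∈ S, c1 e

open scoped Classical in
/-- Second objective (stretch factor): maximum over pairs of distinct vertices of the
distance ratio `d^S(u,v)/d^E(u,v)` (junk value `0` if there is no pair of distinct vertices). -/
noncomputable def f2 [Fintype V] (E S : Set (Sym2 V)) (c2 : Sym2 V → ℕ) : ℚ :=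
  if h : ((Finset.univ : Finset (V × V)).filter fun p => p.1 ≠ p.2).Nonempty then
    ((Finset.univ : Finset (V × V)).filter fun p => p.1 ≠ p.2).sup' h
      (fun p => (wdist S c2 p.1 p.2 : ℚ) / (wdist E c2 p.1 p.2 : ℚ))
  else 0

/-- The value vector of a spanner. -/
noncomputable def valueVec [Fintype V] (G : SimpleGraph V) (c1 : Sym2 V → ℤ) (c2 : Sym2 V → ℕ)
    (S : Finset (Sym2 V)) : ℚ × ℚ :=
  ((f1 c1 S : ℚ), f2 G.edgeSet (↑S) c2)

/-- `y'` dominates `y`: componentwise `≤` and unequal. -/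
def Dominates (y' y : ℚ × ℚ) : Prop := y' ≤ y ∧ y' ≠ y

/-- The non-dominated set of an MSp instance. -/
def YN [Fintype V] (G : SimpleGraph V) (c1 : Sym2 V → ℤ) (c2 : Sym2 V → ℕ) : Set (ℚ × ℚ) :=
  {y | (∃ S : Finset (Sym2 V), IsSpanner G (↑S) ∧ valueVec G c1 c2 S = y) ∧
       ∀ S' : Finset (Sym2 V), IsSpanner G (↑S') → ¬ Dominates (valueVec G c1 c2 S') y}


/-! ### The MSp instance associated with a BUCO instance (Section 4)

A BUCO instance is given by vectors `a = c¹` and `b = c²` in `ℕ₊ⁿ`; feasible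
solutions are `x : Fin n → Bool` (`x i = true` meaning `x_i = 1`). -/

/-- Vertices of the graph `H`: for each `i`, the vertex `(i,0)` is `v_i`, `(i,1)` is `v_i'`,
and `(i,2)` is `w_i`. -/
abbrev Vtx (n : ℕ) := Fin n × Fin 3

/-- The weights `(c1, c2)` of the (ordered) pair `x y` of vertices of `H`;
`(0, 0)` (in particular `c2 = 0`) marks non-edges.
Here `M = (∑ i, a i) + 1`. -/
def wtB (n : ℕ) (a b : Fin n → ℕ) (x y : Vtx n) : ℤ × ℕ :=
  if x.2 = 0 ∧ y.2 = 2 ∧ x.1 = y.1 then (0, b x.1 + 2)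
  else if x.2 = 0 ∧ y.2 = 1 ∧ x.1 = y.1 then (0, 1)
  else if x.2 = 1 ∧ y.2 = 2 ∧ x.1 = y.1 then ((a x.1 : ℤ), 1)
  else if x.2 = 2 ∧ y.2 = 0 ∧ (y.1 : ℕ) = (x.1 : ℕ) + 1 then (0, 1)
  else if x.2 = 0 ∧ y.2 = 2 ∧ (x.1 : ℕ) = 0 ∧ (y.1 : ℕ) = n - 1 ∧ x.1 ≠ y.1 then
    (((∑ i, a i : ℕ) : ℤ) + 1, 1)
  else (0, 0)

/-- The cost function `c1` of `H`. -/
def c1B (n : ℕ) (a b : Fin n → ℕ) : Sym2 (Vtx n) → ℤ :=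
  Sym2.lift ⟨fun x y => (wtB n a b x y).1 + (wtB n a b y x).1, fun _ _ => add_comm _ _⟩

/-- The length function `c2` of `H`. -/
def c2B (n : ℕ) (a b : Fin n → ℕ) : Sym2 (Vtx n) → ℕ :=
  Sym2.lift ⟨fun x y => (wtB n a b x y).2 + (wtB n a b y x).2, fun _ _ => add_comm _ _⟩

/-- The edge set of `H`: exactly the pairs with positive length. -/
def EB (n : ℕ) (a b : Fin n → ℕ) : Set (Sym2 (Vtx n)) := {e | c2B n a b e ≠ 0}

/-- The graph `H` associated with the BUCO instance `(a, b)`. -/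
def HB (n : ℕ) (a b : Fin n → ℕ) : SimpleGraph (Vtx n) :=
  SimpleGraph.fromEdgeSet (EB n a b)

/-- The vertex `v_i`. -/
def vB (n : ℕ) (i : Fin n) : Vtx n := (i, 0)
/-- The vertex `v_i'`. -/
def pB (n : ℕ) (i : Fin n) : Vtx n := (i, 1)
/-- The vertex `w_i`. -/
def wB (n : ℕ) (i : Fin n) : Vtx n := (i, 2)
/-- The vertex `s = v_1`. -/
def sB (n : ℕ) (hn : 0 < n) : Vtx n := (⟨0, hn⟩, 0)
/-- The vertex `t = w_n`. -/
def tB (n : ℕ) (hn : 0 < n) : Vtx n := (⟨n - 1, Nat.sub_lt hn one_pos⟩, 2)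

open scoped Classical in
/-- The spanner `S_x` of `H` associated with a BUCO solution `x`: all edges of zero
`c1`-cost together with the edges `{v_i', w_i}` for every `i` with `x_i = 0`. -/
noncomputable def Sx (n : ℕ) (a b : Fin n → ℕ) (x : Fin n → Bool) : Finset (Sym2 (Vtx n)) :=
  (Finset.univ.filter fun e => e ∈ (HB n a b).edgeSet ∧ c1B n a b e = 0) ∪
    (Finset.univ.filter fun i : Fin n => x i = false).image fun i => s(pB n i, wB n i)

/-- The value vector `(-c¹ᵀx, c²ᵀx)` of a BUCO solution `x`, as a vector in `ℚ²`. -/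
def bucoVal (n : ℕ) (a b : Fin n → ℕ) (x : Fin n → Bool) : ℚ × ℚ :=
  (-(∑ i, if x i then (a i : ℚ) else 0), ∑ i, if x i then (b i : ℚ) else 0)

/-! A non-dominated point `y` with `y¹ ≥ M` is realized by a spanner `S` containing every edge of
zero cost (adding them is free and only shortens distances), and, since its cost is at least `M`,
the edge `{s, t}`. If `S` contains every edge `{v_i', w_i}` as well, then `S = E` and the stretch
is `1`. Otherwise let `i` maximize `b_i` among the missing ones: detours through `v_i` show that
the stretch is at most `b_i + 3`, and a potential along the Hamiltonian cycle of `H` shows that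
`d^S(v_i', w_i) ≥ min (b_i + 3) (3n - 1)`. The spanner `S_x` for `x = 0` has cost below `M` and
stretch at most `3n - 1`, so non-dominance excludes the second alternative. Hence `y²` lies in
`{1} ∪ {b_i + 3}`, and non-dominated points are determined by their second coordinate. -/

section WeightedDistance

variable (F : Set (Sym2 V)) (c2 : Sym2 V → ℕ)

lemma wdist_le_walk {u v : V} (p : (fromEdgeSet F).Walk u v) :
    wdist F c2 u v ≤ (p.edges.map c2).sum :=
  Nat.sInf_le ⟨p, rfl⟩

lemma exists_walk_eq_wdist {u v : V} (h : (fromEdgeSet F).Reachable u v) :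
    ∃ p : (fromEdgeSet F).Walk u v, (p.edges.map c2).sum = wdist F c2 u v :=
  Nat.sInf_mem (Set.range_nonempty_iff_nonempty.mpr h)

lemma reachable_of_wdist_ne_zero {u v : V} (h : wdist F c2 u v ≠ 0) :
    (fromEdgeSet F).Reachable u v := by
  by_contra hr
  rw [SimpleGraph.Reachable, not_nonempty_iff] at hr
  exact h (by rw [wdist, Set.range_eq_empty, Nat.sInf_empty])

lemma wdist_self (u : V) : wdist F c2 u u = 0 :=
  Nat.le_zero.mp (wdist_le_walk F c2 Walk.nil)

lemma wdist_le_of_mem {x y : V} (h : s(x, y) ∈ F) : wdist F c2 x y ≤ c2 s(x, y) := by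
  rcases eq_or_ne x y with rfl | hne
  · simp [wdist_self]
  · have hadj : (fromEdgeSet F).Adj x y := (fromEdgeSet_adj F).mpr ⟨h, hne⟩
    simpa using wdist_le_walk F c2 (hadj.toWalk)

lemma wdist_le_mul_of_mem {K : ℕ} (hK : 1 ≤ K) {x y : V} (h : s(x, y) ∈ F) :
    wdist F c2 x y ≤ K * c2 s(x, y) :=
  (wdist_le_of_mem F c2 h).trans (Nat.le_mul_of_pos_left _ hK)

lemma wdist_le_wdist_swap (u v : V) : wdist F c2 u v ≤ wdist F c2 v u := by
  by_cases h : (fromEdgeSet F).Reachable v u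
  · obtain ⟨q, hq⟩ := exists_walk_eq_wdist F c2 h
    calc wdist F c2 u v ≤ (q.reverse.edges.map c2).sum := wdist_le_walk F c2 _
      _ = wdist F c2 v u := by rw [Walk.edges_reverse, List.map_reverse, List.sum_reverse, hq]
  · have : wdist F c2 u v = 0 := by_contra fun h' => h (reachable_of_wdist_ne_zero F c2 h').symm
    omega

lemma wdist_comm (u v : V) : wdist F c2 u v = wdist F c2 v u :=
  le_antisymm (wdist_le_wdist_swap F c2 u v) (wdist_le_wdist_swap F c2 v u)

lemma wdist_triangle {u v w : V} (huv : (fromEdgeSet F).Reachable u v)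
    (hvw : (fromEdgeSet F).Reachable v w) :
    wdist F c2 u w ≤ wdist F c2 u v + wdist F c2 v w := by
  obtain ⟨p, hp⟩ := exists_walk_eq_wdist F c2 huv
  obtain ⟨q, hq⟩ := exists_walk_eq_wdist F c2 hvw
  calc wdist F c2 u w ≤ ((p.append q).edges.map c2).sum := wdist_le_walk F c2 _
    _ = wdist F c2 u v + wdist F c2 v w := by
      rw [Walk.edges_append, List.map_append, List.sum_append, hp, hq]

lemma wdist_anti {F F' : Set (Sym2 V)} (h : F ⊆ F') {u v : V}
    (hr : (fromEdgeSet F).Reachable u v) : wdist F' c2 u v ≤ wdist F c2 u v := by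
  obtain ⟨p, hp⟩ := exists_walk_eq_wdist F c2 hr
  have hsub : ∀ e ∈ p.edges, e ∈ (fromEdgeSet F').edgeSet := fun _ he =>
    edgeSet_mono (fromEdgeSet_mono h) (p.edges_subset_edgeSet he)
  calc wdist F' c2 u v ≤ ((p.transfer _ hsub).edges.map c2).sum := wdist_le_walk F' c2 _
    _ = wdist F c2 u v := by rw [Walk.edges_transfer, hp]

lemma wdist_le_mul_wdist {F' : Set (Sym2 V)} {K : ℕ} (hF : (fromEdgeSet F).Preconnected)
    (h : ∀ x y, s(x, y) ∈ F' → wdist F c2 x y ≤ K * c2 s(x, y)) {u v : V}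
    (hr : (fromEdgeSet F').Reachable u v) : wdist F c2 u v ≤ K * wdist F' c2 u v := by
  obtain ⟨p, hp⟩ := exists_walk_eq_wdist F' c2 hr
  rw [← hp]
  clear hp hr
  induction p with
  | nil => simp [wdist_self]
  | @cons x y z hadj q ih =>
    calc wdist F c2 x z ≤ wdist F c2 x y + wdist F c2 y z := wdist_triangle F c2 (hF x y) (hF y z)
      _ ≤ K * c2 s(x, y) + K * (q.edges.map c2).sum :=
        Nat.add_le_add (h x y ((fromEdgeSet_adj F').mp hadj).1) ih
      _ = K * ((Walk.cons hadj q).edges.map c2).sum := by simp [Nat.mul_add]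

lemma abs_sub_le_wdist (φ : V → ℤ) (h : ∀ x y, s(x, y) ∈ F → |φ x - φ y| ≤ c2 s(x, y))
    {u v : V} (hr : (fromEdgeSet F).Reachable u v) : |φ u - φ v| ≤ wdist F c2 u v := by
  obtain ⟨p, hp⟩ := exists_walk_eq_wdist F c2 hr
  rw [← hp]
  clear hp hr
  induction p with
  | nil => simp
  | @cons x y z hadj q ih =>
    calc |φ x - φ z| ≤ |φ x - φ y| + |φ y - φ z| := abs_sub_le _ _ _
      _ ≤ c2 s(x, y) + ((q.edges.map c2).sum : ℤ) :=
        add_le_add (h x y ((fromEdgeSet_adj F).mp hadj).1) ih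
      _ = ((Walk.cons hadj q).edges.map c2).sum := by simp

lemma one_le_wdist (hpos : ∀ e ∈ F, c2 e ≠ 0) {u v : V} (hne : u ≠ v)
    (hr : (fromEdgeSet F).Reachable u v) : 1 ≤ wdist F c2 u v := by
  classical
  have hlip : ∀ x y, s(x, y) ∈ F →
      |(if x = u then 1 else 0 : ℤ) - (if y = u then 1 else 0)| ≤ c2 s(x, y) := by
    intro x y hxy
    have : (1 : ℤ) ≤ c2 s(x, y) := by exact_mod_cast Nat.one_le_iff_ne_zero.mpr (hpos _ hxy)
    split_ifs <;> simp <;> linarith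
  have h := abs_sub_le_wdist F c2 _ hlip hr
  simpa [hne.symm] using h

end WeightedDistance

section Objectives

variable [Fintype V] (E S : Set (Sym2 V)) (c2 : Sym2 V → ℕ)

lemma le_f2 {u v : V} (huv : u ≠ v) :
    (wdist S c2 u v : ℚ) / wdist E c2 u v ≤ f2 E S c2 := by
  classical
  have hmem : (u, v) ∈ (Finset.univ : Finset (V × V)).filter fun p => p.1 ≠ p.2 := by simp [huv]
  rw [f2, dif_pos ⟨_, hmem⟩]
  exact Finset.le_sup' (fun p : V × V => (wdist S c2 p.1 p.2 : ℚ) / wdist E c2 p.1 p.2) hmem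

lemma f2_le {B : ℚ} (hB : 0 ≤ B)
    (h : ∀ u v : V, u ≠ v → (wdist S c2 u v : ℚ) / wdist E c2 u v ≤ B) : f2 E S c2 ≤ B := by
  classical
  rw [f2]
  split_ifs with hne
  · exact Finset.sup'_le _ _ fun p hp => h p.1 p.2 (Finset.mem_filter.mp hp).2
  · exact hB

lemma f2_nonneg : 0 ≤ f2 E S c2 := by
  classical
  rw [f2]
  split_ifs with hne
  · obtain ⟨p, hp⟩ := hne
    exact (by positivity : (0 : ℚ) ≤ (wdist S c2 p.1 p.2 : ℚ) / wdist E c2 p.1 p.2).trans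
      (Finset.le_sup' (fun p : V × V => (wdist S c2 p.1 p.2 : ℚ) / wdist E c2 p.1 p.2) hp)
  · exact le_rfl

variable {E S}

lemma f2_anti {S' : Set (Sym2 V)} (h : S ⊆ S') (hS : (fromEdgeSet S).Preconnected) :
    f2 E S' c2 ≤ f2 E S c2 :=
  f2_le E S' c2 (f2_nonneg E S c2) fun u v huv =>
    (div_le_div_of_nonneg_right (by exact_mod_cast wdist_anti c2 h (hS u v)) (by positivity)).trans
      (le_f2 E S c2 huv)

lemma f2_le_of_edge_stretch {K : ℕ} (hS : (fromEdgeSet S).Preconnected)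
    (h : ∀ x y, s(x, y) ∈ E → wdist S c2 x y ≤ K * c2 s(x, y)) : f2 E S c2 ≤ K := by
  refine f2_le E S c2 (by positivity) fun u v _ => ?_
  rcases Nat.eq_zero_or_pos (wdist E c2 u v) with h0 | hpos
  · simp [h0]
  · rw [div_le_iff₀ (by exact_mod_cast hpos)]
    exact_mod_cast wdist_le_mul_wdist S c2 hS h
      (reachable_of_wdist_ne_zero E c2 hpos.ne')

lemma one_le_f2 [Nontrivial V] (hpos : ∀ e ∈ E, c2 e ≠ 0) (hSE : S ⊆ E)
    (hS : (fromEdgeSet S).Preconnected) : 1 ≤ f2 E S c2 := by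
  obtain ⟨u, v, huv⟩ := exists_pair_ne V
  have hE : 1 ≤ wdist E c2 u v :=
    one_le_wdist E c2 hpos huv ((hS u v).mono (fromEdgeSet_mono hSE))
  have hSE' : wdist E c2 u v ≤ wdist S c2 u v := wdist_anti c2 hSE (hS u v)
  refine le_trans ?_ (le_f2 E S c2 huv)
  rw [one_le_div (by exact_mod_cast hE)]
  exact_mod_cast hSE'

end Objectives

section NonDominated

variable [Fintype V] {G : SimpleGraph V} {c1 : Sym2 V → ℤ} {c2 : Sym2 V → ℕ} {y : ℚ × ℚ}

lemma snd_lt_of_mem_YN (hy : y ∈ YN G c1 c2) {S : Finset (Sym2 V)} (hS : IsSpanner G ↑S)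
    (h1 : (valueVec G c1 c2 S).1 < y.1) : y.2 < (valueVec G c1 c2 S).2 := by
  by_contra! h2
  exact hy.2 S hS ⟨⟨h1.le, h2⟩, fun h => h1.ne (congrArg Prod.fst h)⟩

lemma YN_snd_injOn : Set.InjOn Prod.snd (YN G c1 c2) := by
  intro y hy y' hy' h2
  obtain ⟨⟨S, hS, rfl⟩, -⟩ := id hy
  obtain ⟨⟨S', hS', rfl⟩, -⟩ := id hy'
  rcases lt_trichotomy (valueVec G c1 c2 S).1 (valueVec G c1 c2 S').1 with h1 | h1 | h1
  · exact absurd h2 (snd_lt_of_mem_YN hy' hS h1).ne'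
  · exact Prod.ext h1 h2
  · exact absurd h2 (snd_lt_of_mem_YN hy hS' h1).ne

lemma exists_spanner_superset_of_mem_YN (hy : y ∈ YN G c1 c2) {Z : Finset (Sym2 V)}
    (hZ : ↑Z ⊆ G.edgeSet) (hZ0 : ∀ e ∈ Z, c1 e = 0) :
    ∃ S : Finset (Sym2 V), IsSpanner G ↑S ∧ Z ⊆ S ∧ valueVec G c1 c2 S = y := by
  classical
  obtain ⟨⟨S, hS, rfl⟩, hnd⟩ := id hy
  have hSZ : IsSpanner G ↑(S ∪ Z) := by
    refine ⟨?_, hS.2.mono (fromEdgeSet_mono ?_)⟩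
    · rw [Finset.coe_union]
      exact Set.union_subset hS.1 hZ
    · simp
  have hf1 : f1 c1 (S ∪ Z) = f1 c1 S :=
    (Finset.sum_subset Finset.subset_union_left fun e he heS =>
      hZ0 e ((Finset.mem_union.mp he).resolve_left heS)).symm
  have hle : valueVec G c1 c2 (S ∪ Z) ≤ valueVec G c1 c2 S :=
    ⟨by simp [valueVec, hf1], f2_anti c2 (by simp) hS.2.preconnected⟩
  refine ⟨S ∪ Z, hSZ, Finset.subset_union_right, ?_⟩
  by_contra hne
  exact hnd _ hSZ ⟨hle, hne⟩

end NonDominated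

section Instance

variable {n : ℕ} {a b : Fin n → ℕ}

-- For `n = 1` there is no separate edge `{s, t}`: it would coincide with `{v_1, w_1}`.
lemma EB_cases {P : Vtx n → Vtx n → Prop} {x y : Vtx n} (h : s(x, y) ∈ EB n a b)
    (symm : ∀ x y, P x y → P y x)
    (vw : ∀ i, P (vB n i) (wB n i)) (vp : ∀ i, P (vB n i) (pB n i))
    (pw : ∀ i, P (pB n i) (wB n i))
    (wv : ∀ i j : Fin n, (j : ℕ) = i + 1 → P (wB n i) (vB n j))
    (st : ∀ (hn : 0 < n), 2 ≤ n → P (sB n hn) (tB n hn)) : P x y := by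
  have key : ∀ x y : Vtx n, (wtB n a b x y).2 ≠ 0 → P x y := by
    rintro ⟨i, k⟩ ⟨j, l⟩ h
    simp only [wtB] at h
    split_ifs at h with h1 h2 h3 h4 h5
    · obtain ⟨rfl, rfl, rfl⟩ := h1; exact vw i
    · obtain ⟨rfl, rfl, rfl⟩ := h2; exact vp i
    · obtain ⟨rfl, rfl, rfl⟩ := h3; exact pw i
    · obtain ⟨rfl, rfl, hj⟩ := h4; exact wv i j hj
    · obtain ⟨rfl, rfl, hi, hj, hij⟩ := h5
      have hn2 : 2 ≤ n := by
        by_contra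
        exact hij (Fin.ext (by omega))
      have hn : 0 < n := i.pos
      obtain rfl : i = ⟨0, hn⟩ := Fin.ext hi
      obtain rfl : j = ⟨n - 1, Nat.sub_lt hn one_pos⟩ := Fin.ext hj
      exact st hn hn2
    · exact absurd rfl h
  have h' : (wtB n a b x y).2 + (wtB n a b y x).2 ≠ 0 := h
  rcases Nat.eq_zero_or_pos (wtB n a b x y).2 with h0 | hpos
  · exact symm _ _ (key y x (by omega))
  · exact key x y hpos.ne'

section Costs

variable (a b)

@[simp] lemma c2B_vB_wB (i : Fin n) : c2B n a b s(vB n i, wB n i) = b i + 2 := by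
  simp [c2B, wtB, vB, wB]

@[simp] lemma c1B_vB_wB (i : Fin n) : c1B n a b s(vB n i, wB n i) = 0 := by
  simp [c1B, wtB, vB, wB]

@[simp] lemma c2B_vB_pB (i : Fin n) : c2B n a b s(vB n i, pB n i) = 1 := by
  simp [c2B, wtB, vB, pB]

@[simp] lemma c1B_vB_pB (i : Fin n) : c1B n a b s(vB n i, pB n i) = 0 := by
  simp [c1B, wtB, vB, pB]

@[simp] lemma c2B_pB_wB (i : Fin n) : c2B n a b s(pB n i, wB n i) = 1 := by
  simp [c2B, wtB, pB, wB]

@[simp] lemma c1B_pB_wB (i : Fin n) : c1B n a b s(pB n i, wB n i) = a i := by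
  simp [c1B, wtB, pB, wB]

lemma c2B_wB_vB {i j : Fin n} (hj : (j : ℕ) = i + 1) : c2B n a b s(wB n i, vB n j) = 1 := by
  simp [c2B, wtB, wB, vB, Fin.ext_iff, hj, -Fin.val_eq_zero_iff]

lemma c1B_wB_vB {i j : Fin n} (hj : (j : ℕ) = i + 1) : c1B n a b s(wB n i, vB n j) = 0 := by
  simp [c1B, wtB, wB, vB, Fin.ext_iff, hj, -Fin.val_eq_zero_iff]

lemma c2B_sB_tB (hn : 0 < n) (hn2 : 2 ≤ n) : c2B n a b s(sB n hn, tB n hn) = 1 := by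
  have : (0 : ℕ) ≠ n - 1 := by omega
  simp [c2B, wtB, sB, tB, Fin.ext_iff, this, -Fin.val_eq_zero_iff]

lemma c1B_sB_tB (hn : 0 < n) (hn2 : 2 ≤ n) :
    c1B n a b s(sB n hn, tB n hn) = ((∑ i, a i : ℕ) : ℤ) + 1 := by
  have : (0 : ℕ) ≠ n - 1 := by omega
  simp [c1B, wtB, sB, tB, Fin.ext_iff, this, -Fin.val_eq_zero_iff]

lemma c2B_diag (x : Vtx n) : c2B n a b s(x, x) = 0 := by
  obtain ⟨i, k⟩ := x
  fin_cases k <;> simp [c2B, wtB]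

end Costs

lemma edgeSet_HB : (HB n a b).edgeSet = EB n a b := by
  ext e
  induction e using Sym2.ind with
  | _ x y =>
    simp only [HB, edgeSet_fromEdgeSet, Set.mem_sdiff]
    refine ⟨And.left, fun h => ⟨h, ?_⟩⟩
    rintro (rfl : x = y)
    exact h (c2B_diag a b x)

lemma preconnected_of_forall_mem {F : Set (Sym2 (Vtx n))}
    (hvp : ∀ i, s(vB n i, pB n i) ∈ F)
    (hwv : ∀ i j : Fin n, (j : ℕ) = i + 1 → s(wB n i, vB n j) ∈ F)
    (hvw : ∀ i, s(vB n i, wB n i) ∈ F ∨ s(pB n i, wB n i) ∈ F) :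
    (fromEdgeSet F).Preconnected := by
  have adj : ∀ {x y}, s(x, y) ∈ F → x ≠ y → (fromEdgeSet F).Reachable x y :=
    fun h hne => ((fromEdgeSet_adj F).mpr ⟨h, hne⟩).reachable
  have hvp' (i : Fin n) : (fromEdgeSet F).Reachable (vB n i) (pB n i) :=
    adj (hvp i) (by simp [vB, pB])
  have hvw' (i : Fin n) : (fromEdgeSet F).Reachable (vB n i) (wB n i) :=
    (hvw i).elim (fun h => adj h (by simp [vB, wB]))
      (fun h => (hvp' i).trans (adj h (by simp [pB, wB])))
  have hv (k : ℕ) (hk : k < n) :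
      (fromEdgeSet F).Reachable (vB n ⟨0, by omega⟩) (vB n ⟨k, hk⟩) := by
    induction k with
    | zero => rfl
    | succ k ih =>
      exact (ih (by omega)).trans <| (hvw' _).trans <|
        adj (hwv ⟨k, by omega⟩ ⟨k + 1, hk⟩ rfl) (by simp [wB, vB])
  have hx (x : Vtx n) : (fromEdgeSet F).Reachable (vB n ⟨0, x.1.pos⟩) x := by
    obtain ⟨⟨j, hj⟩, k⟩ := x
    fin_cases k
    · exact hv j hj
    · exact (hv j hj).trans (hvp' _)
    · exact (hv j hj).trans (hvw' _)
  exact fun x y => (hx x).symm.trans (hx y)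

lemma wdist_vB_zero_wB_le {F : Set (Sym2 (Vtx n))}
    (hvp : ∀ i, s(vB n i, pB n i) ∈ F) (hpw : ∀ i, s(pB n i, wB n i) ∈ F)
    (hwv : ∀ i j : Fin n, (j : ℕ) = i + 1 → s(wB n i, vB n j) ∈ F) (k : ℕ) (hk : k < n) :
    wdist F (c2B n a b) (vB n ⟨0, by omega⟩) (wB n ⟨k, hk⟩) ≤ 3 * k + 2 := by
  have hF := preconnected_of_forall_mem hvp hwv fun i => Or.inr (hpw i)
  have hvw (i : Fin n) : wdist F (c2B n a b) (vB n i) (wB n i) ≤ 2 :=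
    calc wdist F (c2B n a b) (vB n i) (wB n i)
        ≤ wdist F (c2B n a b) (vB n i) (pB n i) + wdist F (c2B n a b) (pB n i) (wB n i) :=
          wdist_triangle F _ (hF _ _) (hF _ _)
      _ ≤ 1 + 1 := by
          gcongr
          · simpa using wdist_le_of_mem F (c2B n a b) (hvp i)
          · simpa using wdist_le_of_mem F (c2B n a b) (hpw i)
  induction k with
  | zero => exact hvw _
  | succ k ih =>
    have hwv' : wdist F (c2B n a b) (wB n ⟨k, by omega⟩) (vB n ⟨k + 1, hk⟩) ≤ 1 := by
      simpa [c2B_wB_vB] using wdist_le_of_mem F (c2B n a b) (hwv ⟨k, by omega⟩ ⟨k + 1, hk⟩ rfl)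
    calc _ ≤ wdist F (c2B n a b) (vB n ⟨0, by omega⟩) (wB n ⟨k, by omega⟩) +
          wdist F (c2B n a b) (wB n ⟨k, by omega⟩) (vB n ⟨k + 1, hk⟩) +
          wdist F (c2B n a b) (vB n ⟨k + 1, hk⟩) (wB n ⟨k + 1, hk⟩) :=
          (wdist_triangle F _ (hF _ _) (hF _ _)).trans
            (Nat.add_le_add_right (wdist_triangle F _ (hF _ _) (hF _ _)) _)
      _ ≤ 3 * (k + 1) + 2 := by linarith [ih (by omega), hvw ⟨k + 1, hk⟩]

lemma mem_Sx {x : Fin n → Bool} {e : Sym2 (Vtx n)} :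
    e ∈ Sx n a b x ↔
      (e ∈ EB n a b ∧ c1B n a b e = 0) ∨ ∃ i, x i = false ∧ s(pB n i, wB n i) = e := by
  simp [Sx, edgeSet_HB]

lemma vB_wB_mem_Sx (x : Fin n → Bool) (i : Fin n) : s(vB n i, wB n i) ∈ Sx n a b x :=
  mem_Sx.mpr (Or.inl ⟨by simp [EB], by simp⟩)

lemma vB_pB_mem_Sx (x : Fin n → Bool) (i : Fin n) : s(vB n i, pB n i) ∈ Sx n a b x :=
  mem_Sx.mpr (Or.inl ⟨by simp [EB], by simp⟩)

lemma wB_vB_mem_Sx (x : Fin n → Bool) {i j : Fin n} (hj : (j : ℕ) = i + 1) :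
    s(wB n i, vB n j) ∈ Sx n a b x :=
  mem_Sx.mpr (Or.inl ⟨by simp [EB, c2B_wB_vB a b hj], c1B_wB_vB a b hj⟩)

lemma pB_wB_mem_Sx {x : Fin n → Bool} {i : Fin n} (hi : x i = false) :
    s(pB n i, wB n i) ∈ Sx n a b x :=
  mem_Sx.mpr (Or.inr ⟨i, hi, rfl⟩)

lemma coe_Sx_subset (x : Fin n → Bool) : ↑(Sx n a b x) ⊆ EB n a b := by
  intro e he
  rcases mem_Sx.mp he with h | ⟨i, -, rfl⟩
  · exact h.1
  · simp [EB]

lemma preconnected_Sx (x : Fin n → Bool) :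
    (fromEdgeSet (↑(Sx n a b x) : Set (Sym2 (Vtx n)))).Preconnected :=
  preconnected_of_forall_mem (vB_pB_mem_Sx x) (fun _ _ => wB_vB_mem_Sx x)
    fun i => Or.inl (vB_wB_mem_Sx x i)

lemma isSpanner_Sx (hn : 0 < n) (x : Fin n → Bool) : IsSpanner (HB n a b) ↑(Sx n a b x) :=
  have : Nonempty (Vtx n) := ⟨vB n ⟨0, hn⟩⟩
  ⟨edgeSet_HB ▸ coe_Sx_subset x, ⟨preconnected_Sx x⟩⟩

lemma sB_tB_notMem_Sx (hn : 0 < n) (hn2 : 2 ≤ n) (x : Fin n → Bool) :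
    s(sB n hn, tB n hn) ∉ Sx n a b x := by
  rw [mem_Sx, c1B_sB_tB a b hn hn2]
  rintro (⟨-, h⟩ | ⟨i, -, h⟩)
  · omega
  · simp [pB, wB, sB, tB] at h

lemma c1B_eq_zero_of_mem_Sx_true {e : Sym2 (Vtx n)} (he : e ∈ Sx n a b fun _ => true) :
    c1B n a b e = 0 := by
  rcases mem_Sx.mp he with h | ⟨i, hi, -⟩
  · exact h.2
  · simp at hi

lemma f1_le_sum_of_forall_sB_tB_notMem {S : Finset (Sym2 (Vtx n))} (hS : ↑S ⊆ EB n a b)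
    (hst : ∀ (hn : 0 < n), 2 ≤ n → s(sB n hn, tB n hn) ∉ S) :
    f1 (c1B n a b) S ≤ ((∑ i, a i : ℕ) : ℤ) := by
  classical
  set pw := Finset.univ.image fun i : Fin n => s(pB n i, wB n i)
  have hzero : ∀ e ∈ S, e ∉ S ∩ pw → c1B n a b e = 0 := by
    intro e he hpw
    induction e using Sym2.ind with
    | _ x y =>
      refine EB_cases (P := fun x y => s(x, y) ∈ S → s(x, y) ∉ S ∩ pw → c1B n a b s(x, y) = 0)
        (hS he) ?_ ?_ ?_ ?_ ?_ ?_ he hpw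
      · intro x y h; rwa [Sym2.eq_swap]
      · simp
      · simp
      · intro i h h'
        exact absurd (Finset.mem_inter.mpr ⟨h, Finset.mem_image_of_mem (fun i => s(pB n i, wB n i))
          (Finset.mem_univ i)⟩) h'
      · intro i j hj _ _; exact c1B_wB_vB a b hj
      · intro hn hn2 h; exact absurd h (hst hn hn2)
  calc f1 (c1B n a b) S = ∑ e ∈ S ∩ pw, c1B n a b e :=
        (Finset.sum_subset Finset.inter_subset_left hzero).symm
    _ ≤ ∑ e ∈ pw, c1B n a b e :=
        Finset.sum_le_sum_of_subset_of_nonneg Finset.inter_subset_right fun e he _ => by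
          obtain ⟨i, -, rfl⟩ := Finset.mem_image.mp he
          simp
    _ = ((∑ i, a i : ℕ) : ℤ) := by
        rw [Finset.sum_image fun i _ j _ h => ?_]
        · simp
        · rcases Sym2.eq_iff.mp h with ⟨h, -⟩ | ⟨h, -⟩
          · exact congrArg Prod.fst h
          · simp [pB, wB] at h

/-- Position of `x` on the cycle `v₁ v₁' w₁ v₂ v₂' w₂ … w_n` (closed by the edge `{s, t}`),
counted backwards from `v_i'` modulo `3n`: it jumps from `0` to `3n - 1` across `{v_i', w_i}`. -/
def cyclePos (i : Fin n) (x : Vtx n) : ℤ :=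
  let d : ℤ := 3 * (i : ℕ) + 1 - (3 * (x.1 : ℕ) + (x.2 : ℕ))
  if 0 ≤ d then d else d + 3 * n

lemma abs_min_cyclePos_sub_le (i : Fin n) {x y : Vtx n} (h : s(x, y) ∈ EB n a b)
    (hi : s(x, y) ≠ s(pB n i, wB n i)) :
    |min ((b i : ℤ) + 3) (cyclePos i x) - min ((b i : ℤ) + 3) (cyclePos i y)| ≤
      c2B n a b s(x, y) := by
  refine EB_cases (P := fun x y => s(x, y) ≠ s(pB n i, wB n i) →
      |min ((b i : ℤ) + 3) (cyclePos i x) - min ((b i : ℤ) + 3) (cyclePos i y)| ≤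
        c2B n a b s(x, y)) h ?_ ?_ ?_ ?_ ?_ ?_ hi
  · intro x y h hne
    rw [abs_sub_comm, Sym2.eq_swap]
    exact h (by rwa [Sym2.eq_swap])
  -- the cap `b_i + 3` only matters on the chord `{v_i, w_i}`, across which `cyclePos i` jumps
  · intro j _
    rw [c2B_vB_wB, abs_le]
    rcases eq_or_ne j i with rfl | _ <;>
      simp only [cyclePos, vB, wB] <;> split_ifs <;> push_cast <;> omega
  · intro j _
    rw [c2B_vB_pB, abs_le]
    simp only [cyclePos, vB, pB]
    split_ifs <;> push_cast <;> omega
  · intro j hj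
    have : j ≠ i := by rintro rfl; exact hj rfl
    rw [c2B_pB_wB, abs_le]
    simp only [cyclePos, pB, wB]
    split_ifs <;> push_cast <;> omega
  · intro j k hk _
    rw [c2B_wB_vB a b hk, abs_le]
    simp only [cyclePos, vB, wB]
    split_ifs <;> push_cast <;> omega
  · intro hn hn2 _
    rw [c2B_sB_tB a b hn hn2, abs_le]
    simp only [cyclePos, sB, tB]
    split_ifs <;> push_cast <;> omega

lemma cyclePos_pB_self (i : Fin n) : cyclePos i (pB n i) = 0 := by
  simp [cyclePos, pB]

lemma cyclePos_wB_self (i : Fin n) : cyclePos i (wB n i) = 3 * n - 1 := by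
  simp only [cyclePos, wB]
  split_ifs <;> omega

lemma min_le_wdist_pB_wB {S : Set (Sym2 (Vtx n))} (hS : S ⊆ EB n a b) {i : Fin n}
    (hi : s(pB n i, wB n i) ∉ S) (hr : (fromEdgeSet S).Reachable (pB n i) (wB n i)) :
    min (b i + 3) (3 * n - 1) ≤ wdist S (c2B n a b) (pB n i) (wB n i) := by
  have h := abs_sub_le_wdist S (c2B n a b) (fun x => min ((b i : ℤ) + 3) (cyclePos i x))
    (fun x y hxy => abs_min_cyclePos_sub_le i (hS hxy) fun h => hi (h ▸ hxy)) hr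
  simp only [cyclePos_pB_self, cyclePos_wB_self, abs_le] at h
  omega

lemma f2_Sx_false_le (hn2 : 2 ≤ n) :
    f2 (EB n a b) ↑(Sx n a b fun _ => false) (c2B n a b) ≤ ((3 * n - 1 : ℕ) : ℚ) := by
  refine f2_le_of_edge_stretch _ (preconnected_Sx _) fun x y h => ?_
  have hK : 1 ≤ 3 * n - 1 := by omega
  refine EB_cases (P := fun x y => wdist ↑(Sx n a b fun _ => false) (c2B n a b) x y ≤
      (3 * n - 1) * c2B n a b s(x, y)) h ?_ ?_ ?_ ?_ ?_ ?_
  · intro x y h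
    rwa [wdist_comm, Sym2.eq_swap]
  · exact fun i => wdist_le_mul_of_mem _ _ hK (vB_wB_mem_Sx _ i)
  · exact fun i => wdist_le_mul_of_mem _ _ hK (vB_pB_mem_Sx _ i)
  · exact fun i => wdist_le_mul_of_mem _ _ hK (pB_wB_mem_Sx rfl)
  · exact fun i j hj => wdist_le_mul_of_mem _ _ hK (wB_vB_mem_Sx _ hj)
  · intro hn _
    rw [c2B_sB_tB a b hn hn2, mul_one]
    exact (wdist_vB_zero_wB_le (vB_pB_mem_Sx _) (fun _ => pB_wB_mem_Sx rfl)
      (fun _ _ => wB_vB_mem_Sx _) (n - 1) (by omega)).trans (by omega)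

lemma f2_le_of_forall_pB_wB_notMem {S : Set (Sym2 (Vtx n))}
    (hZ : ↑(Sx n a b fun _ => true) ⊆ S) (hst : ∀ (hn : 0 < n), 2 ≤ n → s(sB n hn, tB n hn) ∈ S)
    {K : ℕ} (hK : 1 ≤ K) (hKb : ∀ i, s(pB n i, wB n i) ∉ S → b i + 3 ≤ K) :
    f2 (EB n a b) S (c2B n a b) ≤ K := by
  have hS : (fromEdgeSet S).Preconnected := (preconnected_Sx _).mono (fromEdgeSet_mono hZ)
  refine f2_le_of_edge_stretch _ hS fun x y h => ?_
  refine EB_cases (P := fun x y => wdist S (c2B n a b) x y ≤ K * c2B n a b s(x, y))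
    h ?_ ?_ ?_ ?_ ?_ ?_
  · intro x y h
    rwa [wdist_comm, Sym2.eq_swap]
  · exact fun i => wdist_le_mul_of_mem _ _ hK (hZ (vB_wB_mem_Sx _ i))
  · exact fun i => wdist_le_mul_of_mem _ _ hK (hZ (vB_pB_mem_Sx _ i))
  · intro i
    by_cases hi : s(pB n i, wB n i) ∈ S
    · exact wdist_le_mul_of_mem _ _ hK hi
    rw [c2B_pB_wB, mul_one]
    calc wdist S (c2B n a b) (pB n i) (wB n i)
        ≤ wdist S (c2B n a b) (vB n i) (pB n i) + wdist S (c2B n a b) (vB n i) (wB n i) := by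
          rw [wdist_comm S _ (vB n i)]
          exact wdist_triangle S _ (hS _ _) (hS _ _)
      _ ≤ 1 + (b i + 2) := by
          gcongr
          · simpa using wdist_le_of_mem S (c2B n a b) (hZ (vB_pB_mem_Sx _ i))
          · simpa using wdist_le_of_mem S (c2B n a b) (hZ (vB_wB_mem_Sx _ i))
      _ ≤ K := by linarith [hKb i hi]
  · exact fun i j hj => wdist_le_mul_of_mem _ _ hK (hZ (wB_vB_mem_Sx _ hj))
  · exact fun hn hn2 => wdist_le_mul_of_mem _ _ hK (hst hn hn2)

lemma valueVec_HB_snd (S : Finset (Sym2 (Vtx n))) :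
    (valueVec (HB n a b) (c1B n a b) (c2B n a b) S).2 = f2 (EB n a b) ↑S (c2B n a b) := by
  rw [valueVec, edgeSet_HB]

lemma wdist_EB_pB_wB (i : Fin n) : wdist (EB n a b) (c2B n a b) (pB n i) (wB n i) = 1 := by
  have hmem : s(pB n i, wB n i) ∈ EB n a b := by simp [EB]
  have hne : pB n i ≠ wB n i := by simp [pB, wB]
  refine le_antisymm (by simpa using wdist_le_of_mem _ (c2B n a b) hmem) ?_
  exact one_le_wdist _ _ (fun _ h => h) hne ((fromEdgeSet_adj _).mpr ⟨hmem, hne⟩).reachable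

lemma f2_lt_of_valueVec_mem_YN (hn2 : 2 ≤ n) {S : Finset (Sym2 (Vtx n))}
    (hy : valueVec (HB n a b) (c1B n a b) (c2B n a b) S ∈ YN (HB n a b) (c1B n a b) (c2B n a b))
    (hM : ((∑ i, a i : ℕ) : ℚ) + 1 ≤ f1 (c1B n a b) S) :
    f2 (EB n a b) ↑S (c2B n a b) < ((3 * n - 1 : ℕ) : ℚ) := by
  have hR : (f1 (c1B n a b) (Sx n a b fun _ => false) : ℚ) ≤ ((∑ i, a i : ℕ) : ℚ) := by
    exact_mod_cast f1_le_sum_of_forall_sB_tB_notMem (coe_Sx_subset _)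
      fun hn hn2 => sB_tB_notMem_Sx hn hn2 _
  have := snd_lt_of_mem_YN hy (isSpanner_Sx (by omega) fun _ => false)
    (by simp only [valueVec]; linarith)
  rw [valueVec_HB_snd, valueVec_HB_snd] at this
  exact this.trans_le (f2_Sx_false_le hn2)

lemma b_add_three_le_f2 {S : Set (Sym2 (Vtx n))} (hSE : S ⊆ EB n a b)
    (hS : (fromEdgeSet S).Preconnected) {i : Fin n} (hi : s(pB n i, wB n i) ∉ S)
    (hlt : f2 (EB n a b) S (c2B n a b) < ((3 * n - 1 : ℕ) : ℚ)) :
    (b i : ℚ) + 3 ≤ f2 (EB n a b) S (c2B n a b) := by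
  have hratio := le_f2 (EB n a b) S (c2B n a b) (show pB n i ≠ wB n i by simp [pB, wB])
  rw [wdist_EB_pB_wB, Nat.cast_one, div_one] at hratio
  have hlow := min_le_wdist_pB_wB hSE hi (hS _ _)
  have : wdist S (c2B n a b) (pB n i) (wB n i) < 3 * n - 1 := by
    exact_mod_cast hratio.trans_lt hlt
  have : ((b i + 3 : ℕ) : ℚ) ≤ wdist S (c2B n a b) (pB n i) (wB n i) := by
    exact_mod_cast (by omega)
  push_cast at this
  linarith

lemma snd_eq_one_or_exists_of_mem_YN {y : ℚ × ℚ}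
    (hy : y ∈ YN (HB n a b) (c1B n a b) (c2B n a b)) (hM : ((∑ i, a i : ℕ) : ℚ) + 1 ≤ y.1) :
    y.2 = 1 ∨ ∃ i, y.2 = b i + 3 := by
  classical
  obtain ⟨S, hS, hZS, rfl⟩ := exists_spanner_superset_of_mem_YN hy
    (edgeSet_HB ▸ coe_Sx_subset _) fun _ => c1B_eq_zero_of_mem_Sx_true
  have hSE : ↑S ⊆ EB n a b := edgeSet_HB ▸ hS.1
  obtain ⟨hn, hn2, hst⟩ : ∃ (hn : 0 < n), 2 ≤ n ∧ s(sB n hn, tB n hn) ∈ S := by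
    by_contra! h
    have : (f1 (c1B n a b) S : ℚ) ≤ ((∑ i, a i : ℕ) : ℚ) :=
      by exact_mod_cast f1_le_sum_of_forall_sB_tB_notMem hSE h
    exact absurd hM (by simp only [valueVec]; linarith)
  have hlt := f2_lt_of_valueVec_mem_YN hn2 hy hM
  rw [valueVec_HB_snd]
  by_cases hall : ∀ i, s(pB n i, wB n i) ∈ S
  · have : Nontrivial (Vtx n) := ⟨⟨vB n ⟨0, hn⟩, pB n ⟨0, hn⟩, by simp [vB, pB]⟩⟩
    refine Or.inl (le_antisymm ?_ (one_le_f2 _ (fun _ h => h) hSE hS.2.preconnected))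
    exact_mod_cast f2_le_of_forall_pB_wB_notMem hZS (fun _ _ => hst) le_rfl
      fun i hi => absurd (hall i) hi
  · obtain ⟨i₀, hi₀⟩ := not_forall.mp hall
    obtain ⟨i, hi, hmax⟩ := Finset.exists_max_image
      (Finset.univ.filter fun i => s(pB n i, wB n i) ∉ S) b ⟨i₀, by simpa using hi₀⟩
    refine Or.inr ⟨i, le_antisymm ?_ ?_⟩
    · exact_mod_cast f2_le_of_forall_pB_wB_notMem hZS (fun _ _ => hst) (by omega)
        fun j hj => by simpa using hmax j (by simpa using hj)
    · exact b_add_three_le_f2 hSE hS.2.preconnected (by simpa using hi) hlt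

end Instance

theorem card_YN_above_M_le_general (n : ℕ) (a b : Fin n → ℕ) :
    ({y ∈ YN (HB n a b) (c1B n a b) (c2B n a b) |
        ((∑ i, a i : ℕ) : ℚ) + 1 ≤ y.1}).ncard ≤ n + 1 := by
  classical
  set A := {y ∈ YN (HB n a b) (c1B n a b) (c2B n a b) | ((∑ i, a i : ℕ) : ℚ) + 1 ≤ y.1}
  set W := insert 1 (Finset.univ.image fun i : Fin n => (b i : ℚ) + 3)
  have hAW : Prod.snd '' A ⊆ ↑W := by
    rintro _ ⟨y, ⟨hy, hM⟩, rfl⟩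
    rcases snd_eq_one_or_exists_of_mem_YN hy hM with h | ⟨i, h⟩ <;> simp [W, h]
  calc A.ncard = (Prod.snd '' A).ncard :=
        (YN_snd_injOn.mono fun _ hy => hy.1).ncard_image.symm
    _ ≤ W.card := Set.ncard_coe_finset W ▸ Set.ncard_le_ncard hAW W.finite_toSet
    _ ≤ n + 1 := (Finset.card_insert_le _ _).trans (by simpa using
      (Finset.card_image_le (s := Finset.univ) (f := fun i : Fin n => (b i : ℚ) + 3)))

/-- The non-dominated set of the MSp instance associated with a BUCO
instance contains at most `n + 1` value vectors `y` with first component `y¹ ≥ M`. -/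
theorem card_YN_above_M_le (n : ℕ) (hn : 0 < n) (a b : Fin n → ℕ)
    (ha : ∀ i, 0 < a i) (hb : ∀ i, 0 < b i) :
    ({y ∈ YN (HB n a b) (c1B n a b) (c2B n a b) |
        ((∑ i, a i : ℕ) : ℚ) + 1 ≤ y.1}).ncard ≤ n + 1 :=
  card_YN_above_M_le_general n a b

end MSpPaper
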